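/- Let σ > 0 and μ, c ∈ ℝ. If X is distributed according to the Gaussian measure on ℝ with mean μ and variance σ², then the expected improvement over the threshold c satisfies E[max(0, c − X)] = (c − μ)·Φ((c − μ)/σ) + σ·φ((c − μ)/σ), where Φ and φ denote the cumulative distribution function and probability density function of the standard normal distribution, respectively. -/

import Mathlib

open MeasureTheory ProbabilityTheory Real

/-- The standard normal cumulative distribution function `Φ`. -/
noncomputable def stdGaussianCDF (x : ℝ) : ℝ := (gaussianReal 0 1 (Set.Iic x)).toReal

/-- The standard normal probability density function `φ`. -/
noncomputable def stdGaussianPDF (x : ℝ) : ℝ := gaussianPDFReal 0 1 x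

/-!
Writing `X = σ Z + μ` with `Z` standard normal and `a = (c - μ) / σ`, one has
`max 0 (c - X) = σ · max 0 (a - Z)`, and `E[max 0 (a - Z)] = a Φ(a) - ∫_{z ≤ a} z φ(z) dz`.
Since `φ' = -z φ`, the last integral is `-φ(a)`.
-/

open Filter Set Topology

lemma gaussianReal_eq_map_const_mul_add (μ σ : ℝ) :
    gaussianReal μ ⟨σ ^ 2, sq_nonneg σ⟩ = (gaussianReal 0 1).map (fun z => σ * z + μ) := by
  have h : (fun z => σ * z + μ) = (· + μ) ∘ (σ * ·) := rfl
  rw [h, ← Measure.map_map (by fun_prop) (by fun_prop), gaussianReal_map_const_mul,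
    gaussianReal_map_add_const]
  simp only [mul_zero, zero_add, mul_one]
  rfl

lemma integral_gaussianReal_eq_integral_const_mul_add {E : Type*} [NormedAddCommGroup E]
    [NormedSpace ℝ E] {σ : ℝ} (hσ : σ ≠ 0) (μ : ℝ) (f : ℝ → E) :
    ∫ x, f x ∂gaussianReal μ ⟨σ ^ 2, sq_nonneg σ⟩ = ∫ z, f (σ * z + μ) ∂gaussianReal 0 1 := by
  have he : MeasurableEmbedding (fun z => σ * z + μ) :=
    ((Homeomorph.mulLeft₀ σ hσ).trans (Homeomorph.addRight μ)).measurableEmbedding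
  rw [gaussianReal_eq_map_const_mul_add, he.integral_map]

lemma stdGaussianPDF_eq_mul_exp (x : ℝ) :
    stdGaussianPDF x = (√(2 * π))⁻¹ * exp (-(1 / 2) * x ^ 2) := by
  rw [stdGaussianPDF, gaussianPDFReal, NNReal.coe_one, mul_one, sub_zero]
  ring_nf

lemma hasDerivAt_stdGaussianPDF (x : ℝ) :
    HasDerivAt stdGaussianPDF (-x * stdGaussianPDF x) x := by
  rw [funext stdGaussianPDF_eq_mul_exp]
  exact ((((hasDerivAt_pow 2 x).const_mul (-(1 / 2) : ℝ)).exp).const_mul _).congr_deriv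
    (by ring)

lemma tendsto_stdGaussianPDF_atBot : Tendsto stdGaussianPDF atBot (𝓝 0) := by
  have h := ((tendsto_rpow_abs_mul_exp_neg_mul_sq_cocompact one_half_pos 0).mono_left
    atBot_le_cocompact).const_mul (√(2 * π))⁻¹
  simp only [rpow_zero, one_mul, mul_zero] at h
  rwa [funext stdGaussianPDF_eq_mul_exp]

lemma integrable_mul_stdGaussianPDF : Integrable fun x => x * stdGaussianPDF x := by
  refine ((integrable_mul_exp_neg_mul_sq one_half_pos).const_mul (√(2 * π))⁻¹).congr
    (ae_of_all _ fun x => ?_)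
  simp only [stdGaussianPDF_eq_mul_exp]
  ring

lemma setIntegral_Iic_mul_stdGaussianPDF (a : ℝ) :
    ∫ x in Iic a, x * stdGaussianPDF x = -stdGaussianPDF a := by
  have h := integral_Iic_of_hasDerivAt_of_tendsto' (a := a) (f := fun x => -stdGaussianPDF x)
    (fun x _ => (hasDerivAt_stdGaussianPDF x).neg.congr_deriv (by ring))
    integrable_mul_stdGaussianPDF.integrableOn tendsto_stdGaussianPDF_atBot.neg
  simpa using h

lemma setIntegral_Iic_id_gaussianReal_zero_one (a : ℝ) :
    ∫ x in Iic a, x ∂gaussianReal 0 1 = -stdGaussianPDF a := by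
  rw [← setIntegral_Iic_mul_stdGaussianPDF, ← integral_indicator measurableSet_Iic,
    ← integral_indicator measurableSet_Iic, integral_gaussianReal_eq_integral_smul one_ne_zero]
  congr with x
  by_cases hx : x ∈ Iic a <;> simp [hx, stdGaussianPDF, mul_comm]

lemma integral_max_zero_sub_gaussianReal_zero_one (a : ℝ) :
    ∫ x, max 0 (a - x) ∂gaussianReal 0 1 = a * stdGaussianCDF a + stdGaussianPDF a := by
  have h : (fun x => max 0 (a - x)) = (Iic a).indicator (fun x => a - x) := by
    ext x
    by_cases hx : x ≤ a
    · simp [hx]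
    · simp [hx, (not_le.mp hx).le]
  have hint : IntegrableOn (fun x => x) (Iic a) (gaussianReal 0 1) :=
    ((memLp_id_gaussianReal 1).integrable le_rfl).integrableOn
  rw [h, integral_indicator measurableSet_Iic, integral_sub (integrable_const a) hint,
    setIntegral_const, setIntegral_Iic_id_gaussianReal_zero_one, stdGaussianCDF, measureReal_def,
    smul_eq_mul]
  ring

/-- Closed form of the Expected Improvement: if `X ~ N(μ, σ²)` then
`E[max(0, c − X)] = (c − μ)·Φ((c − μ)/σ) + σ·φ((c − μ)/σ)`. -/
theorem expected_improvement_closed_form (σ μ c : ℝ) (hσ : 0 < σ) :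
    ∫ x, max 0 (c - x) ∂(gaussianReal μ ⟨σ ^ 2, sq_nonneg σ⟩) =
      (c - μ) * stdGaussianCDF ((c - μ) / σ) + σ * stdGaussianPDF ((c - μ) / σ) := by
  have hscale : ∀ z, max 0 (c - (σ * z + μ)) = σ * max 0 ((c - μ) / σ - z) := fun z => by
    rw [mul_max_of_nonneg _ _ hσ.le, mul_zero, mul_sub, mul_div_cancel₀ _ hσ.ne']
    ring_nf
  simp_rw [integral_gaussianReal_eq_integral_const_mul_add hσ.ne', hscale, integral_const_mul,
    integral_max_zero_sub_gaussianReal_zero_one, mul_add, ← mul_assoc, mul_div_cancel₀ _ hσ.ne']
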